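/- arXiv:1806.06149 — 8 statements merged into one kernel-verified Lean document; each statement's English description precedes it below -/
import Mathlib

section
/- For every integer k > 0, every finite simple graph G with maximum degree Δ is (k, ⌊Δ/k⌋)-choosable. -/
/-- For every integer `k > 0`, every finite simple graph `G` with maximum degree `Δ`
is `(k, ⌊Δ/k⌋)`-choosable. -/
theorem graph_is_k_floor_maxDegree_div_k_choosable
    {V : Type*} [Fintype V] [DecidableEq V]
    (G : SimpleGraph V) [DecidableRel G.Adj]
    (k : ℕ) (hk : 0 < k) :
    ∀ L : V → Finset ℕ, (∀ v, k ≤ (L v).card) →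
      ∃ c : V → ℕ, (∀ v, c v ∈ L v) ∧
        ∀ v, ((G.neighborFinset v).filter (fun w => c w = c v)).card ≤ G.maxDegree / k := by
  classical
  intro L hL
  set W : (V → ℕ) → ℕ :=
    fun c => ∑ u, ((G.neighborFinset u).filter (fun w => c w = c u)).card with hW
  have hSne : (Fintype.piFinset (fun v => L v)).Nonempty := by
    rw [Fintype.piFinset_nonempty]
    exact fun v => Finset.card_pos.mp (hk.trans_le (hL v))
  obtain ⟨c, hcS, hcmin⟩ := (Fintype.piFinset (fun v => L v)).exists_min_image W hSne
  refine ⟨c, fun v => Fintype.mem_piFinset.mp hcS v, fun v => ?_⟩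
  by_contra hD
  push_neg at hD
  -- Pigeonhole: some colour `a ∈ L v` appears at most `Δ/k` times in the neighbourhood of `v`.
  have hkey : ∃ a ∈ L v,
      ((G.neighborFinset v).filter (fun w => c w = a)).card ≤ G.maxDegree / k := by
    by_contra h
    push_neg at h
    have h2 : ∑ a ∈ L v, ((G.neighborFinset v).filter (fun w => c w = a)).card
        ≤ G.maxDegree := by
      calc ∑ a ∈ L v, ((G.neighborFinset v).filter (fun w => c w = a)).card
          = ∑ a ∈ L v,
              (((G.neighborFinset v).filter (fun w => c w ∈ L v)).filter
                (fun w => c w = a)).card := by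
            refine Finset.sum_congr rfl fun a ha => ?_
            congr 1
            ext w
            simp only [Finset.mem_filter]
            constructor
            · rintro ⟨hw, hwa⟩; exact ⟨⟨hw, hwa ▸ ha⟩, hwa⟩
            · rintro ⟨⟨hw, _⟩, hwa⟩; exact ⟨hw, hwa⟩
        _ = ((G.neighborFinset v).filter (fun w => c w ∈ L v)).card := by
            rw [← Finset.card_eq_sum_card_fiberwise]
            intro w hw
            exact (Finset.mem_filter.mp hw).2
        _ ≤ (G.neighborFinset v).card := Finset.card_filter_le _ _
        _ = G.degree v := G.card_neighborFinset_eq_degree v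
        _ ≤ G.maxDegree := G.degree_le_maxDegree v
    have h3 : (L v).card * (G.maxDegree / k + 1)
        ≤ ∑ a ∈ L v, ((G.neighborFinset v).filter (fun w => c w = a)).card := by
      have := Finset.card_nsmul_le_sum (L v)
        (fun a => ((G.neighborFinset v).filter (fun w => c w = a)).card)
        (G.maxDegree / k + 1) (fun a ha => h a ha)
      simpa [smul_eq_mul] using this
    have h4 : k * (G.maxDegree / k + 1) ≤ G.maxDegree :=
      le_trans (Nat.mul_le_mul_right _ (hL v)) (le_trans h3 h2)
    rw [Nat.mul_succ] at h4
    have h5 := Nat.div_add_mod G.maxDegree k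
    have h6 := Nat.mod_lt G.maxDegree hk
    omega
  obtain ⟨a, haL, hA⟩ := hkey
  set c' : V → ℕ := Function.update c v a with hc'
  have hc'S : c' ∈ Fintype.piFinset (fun v => L v) := by
    rw [Fintype.mem_piFinset]
    intro u
    rcases eq_or_ne u v with rfl | hu
    · simpa [hc'] using haL
    · simpa [hc', Function.update_of_ne hu] using Fintype.mem_piFinset.mp hcS u
  have hmin := hcmin c' hc'S
  set g : V → ℕ :=
    fun u => (((G.neighborFinset u).erase v).filter (fun w => c w = c u)).card with hg
  -- key per-vertex decomposition
  have key : ∀ (d : V → ℕ), (∀ w, w ≠ v → d w = c w) → ∀ u, u ≠ v →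
      ((G.neighborFinset u).filter (fun w => d w = d u)).card
        = g u + (if v ∈ G.neighborFinset u ∧ d v = c u then 1 else 0) := by
    intro d hd u hu
    have hdu : d u = c u := hd u hu
    have hfe : ((G.neighborFinset u).erase v).filter (fun w => d w = d u)
        = ((G.neighborFinset u).erase v).filter (fun w => c w = c u) := by
      apply Finset.filter_congr
      intro w hw
      rw [hd w (Finset.ne_of_mem_erase hw), hdu]
    by_cases hv : v ∈ G.neighborFinset u
    · have hins : G.neighborFinset u = insert v ((G.neighborFinset u).erase v) :=
        (Finset.insert_erase hv).symm
      rw [hins, Finset.filter_insert]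
      by_cases hdv : d v = c u
      · rw [if_pos (by rw [hdu]; exact hdv),
          Finset.card_insert_of_notMem (by simp), hfe]
        simp [hv, hdv, hg, Nat.add_comm]
      · rw [if_neg (by rw [hdu]; exact hdv), hfe]
        simp [hv, hdv, hg]
    · have : ((G.neighborFinset u).erase v) = G.neighborFinset u :=
        Finset.erase_eq_of_notMem hv
      rw [if_neg (by tauto), ← this, hfe]
      simp [hg]
  -- splitting the weight sum at v
  have hsplit : ∀ (d : V → ℕ), (∀ w, w ≠ v → d w = c w) →
      W d = ((G.neighborFinset v).filter (fun w => d w = d v)).card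
        + ∑ u ∈ Finset.univ.erase v,
            (g u + if v ∈ G.neighborFinset u ∧ d v = c u then 1 else 0) := by
    intro d hd
    rw [hW]
    dsimp only
    rw [← Finset.add_sum_erase _ _ (Finset.mem_univ v)]
    congr 1
    exact Finset.sum_congr rfl fun u hu => key d hd u (Finset.ne_of_mem_erase hu)
  -- the indicator sum counts neighbours of v with given colour
  have hind : ∀ x : ℕ,
      (∑ u ∈ Finset.univ.erase v, if v ∈ G.neighborFinset u ∧ x = c u then 1 else 0)
        = ((G.neighborFinset v).filter (fun w => c w = x)).card := by
    intro x
    have hset : (Finset.univ.erase v).filter (fun u => v ∈ G.neighborFinset u ∧ x = c u)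
        = (G.neighborFinset v).filter (fun w => c w = x) := by
      ext u
      simp only [Finset.mem_filter, Finset.mem_erase, Finset.mem_univ, true_and, and_true,
        SimpleGraph.mem_neighborFinset]
      constructor
      · rintro ⟨hne, hadj, hcol⟩; exact ⟨hadj.symm, hcol.symm⟩
      · rintro ⟨hadj, hcol⟩; exact ⟨hadj.ne', hadj.symm, hcol.symm⟩
    rw [← Finset.card_filter, hset]
  -- compute W c
  have hWc : W c = (∑ u ∈ Finset.univ.erase v, g u)
      + 2 * ((G.neighborFinset v).filter (fun w => c w = c v)).card := by
    rw [hsplit c (fun _ _ => rfl), Finset.sum_add_distrib, hind (c v)]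
    ring
  -- compute W c'
  have hWc' : W c' = (∑ u ∈ Finset.univ.erase v, g u)
      + 2 * ((G.neighborFinset v).filter (fun w => c w = a)).card := by
    have hd : ∀ w, w ≠ v → c' w = c w := fun w hw => Function.update_of_ne hw _ _
    have hv : c' v = a := Function.update_self _ _ _
    rw [hsplit c' hd, Finset.sum_add_distrib, hv, hind a]
    have : ((G.neighborFinset v).filter (fun w => c' w = a))
        = ((G.neighborFinset v).filter (fun w => c w = a)) := by
      apply Finset.filter_congr
      intro w hw
      have hadj : G.Adj v w := by simpa using hw
      rw [hd w hadj.ne']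
    rw [this]
    ring
  rw [hWc, hWc'] at hmin
  omega
end

section
/- Let k > 0 be an integer, G a finite simple graph, and L a k-list assignment of G. Then any L-colouring of G that minimizes the number of monochromatic edges (edges whose two endpoints receive the same colour) has the property that every vertex v has at most ⌊deg(v)/k⌋ neighbours receiving the same colour as v. -/
lemma mono_split {V : Type*} [Fintype V] [DecidableEq V]
    (G : SimpleGraph V) [DecidableRel G.Adj] (c : V → ℕ) (v : V) :
    (G.edgeFinset.filter (fun e => (e.map c).IsDiag)).card
      = (G.edgeFinset.filter (fun e => v ∉ e ∧ (e.map c).IsDiag)).card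
        + ((G.neighborFinset v).filter (fun w => c w = c v)).card := by
  classical
  have hsplit := Finset.card_filter_add_card_filter_not
    (s := G.edgeFinset.filter (fun e => (e.map c).IsDiag)) (p := fun e => v ∉ e)
  rw [Finset.filter_filter, Finset.filter_filter] at hsplit
  have h1 : (G.edgeFinset.filter fun e => (e.map c).IsDiag ∧ v ∉ e)
      = G.edgeFinset.filter (fun e => v ∉ e ∧ (e.map c).IsDiag) := by
    apply Finset.filter_congr; intro e he; tauto
  have h2 : (G.edgeFinset.filter fun e => (e.map c).IsDiag ∧ ¬ v ∉ e).card
      = ((G.neighborFinset v).filter (fun w => c w = c v)).card := by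
    apply Finset.card_bij (fun e he => Sym2.Mem.other (not_not.mp (Finset.mem_filter.mp he).2.2))
    · intro e he
      have hv : v ∈ e := not_not.mp (Finset.mem_filter.mp he).2.2
      obtain ⟨he1, he2, -⟩ := Finset.mem_filter.mp he
      have hspec := Sym2.other_spec hv
      simp only [Finset.mem_filter, SimpleGraph.mem_neighborFinset]
      constructor
      · have : G.Adj v (Sym2.Mem.other hv) := by
          rw [← SimpleGraph.mem_edgeSet, hspec]
          exact SimpleGraph.mem_edgeFinset.mp he1
        exact this
      · rw [← hspec, Sym2.map_pair_eq, Sym2.mk_isDiag_iff] at he2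
        exact he2.symm
    · intro e1 h1' e2 h2' heq
      rw [← Sym2.other_spec (not_not.mp (Finset.mem_filter.mp h1').2.2),
          ← Sym2.other_spec (not_not.mp (Finset.mem_filter.mp h2').2.2), heq]
    · intro w hw
      obtain ⟨hadj, hcol⟩ := Finset.mem_filter.mp hw
      rw [SimpleGraph.mem_neighborFinset] at hadj
      have hmem : s(v, w) ∈ G.edgeFinset.filter fun e => (e.map c).IsDiag ∧ ¬ v ∉ e := by
        simp only [Finset.mem_filter, SimpleGraph.mem_edgeFinset, not_not,
          Sym2.map_pair_eq, Sym2.mk_isDiag_iff]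
        exact ⟨hadj, hcol.symm, Sym2.mem_mk_left v w⟩
      exact ⟨s(v, w), hmem, Sym2.congr_right.mp (Sym2.other_spec _)⟩
  rw [h1] at hsplit
  omega

lemma pigeon {V : Type*} [Fintype V] [DecidableEq V]
    (G : SimpleGraph V) [DecidableRel G.Adj]
    (k : ℕ) (hk : 0 < k) (L : V → Finset ℕ) (hL : ∀ v, k ≤ (L v).card)
    (c : V → ℕ) (v : V) :
    ∃ a ∈ L v, ((G.neighborFinset v).filter (fun w => c w = a)).card ≤ G.degree v / k := by
  by_contra h
  push_neg at h
  have hsum : ∑ a ∈ L v, ((G.neighborFinset v).filter (fun w => c w = a)).card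
      ≤ (G.neighborFinset v).card := by
    rw [← Finset.card_biUnion]
    · apply Finset.card_le_card
      intro w hw
      simp only [Finset.mem_biUnion, Finset.mem_filter] at hw
      tauto
    · intro a _ b _ hab
      refine Finset.disjoint_left.mpr ?_
      intro w h1 h2
      exact hab ((Finset.mem_filter.mp h1).2.symm.trans (Finset.mem_filter.mp h2).2)
  have hlow : (L v).card * (G.degree v / k + 1)
      ≤ ∑ a ∈ L v, ((G.neighborFinset v).filter (fun w => c w = a)).card := by
    calc (L v).card * (G.degree v / k + 1) = ∑ _a ∈ L v, (G.degree v / k + 1) := by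
          rw [Finset.sum_const, smul_eq_mul]
      _ ≤ _ := Finset.sum_le_sum (fun a ha => h a ha)
  have hd : (G.neighborFinset v).card = G.degree v := rfl
  have hk2 : k * (G.degree v / k + 1) ≤ (L v).card * (G.degree v / k + 1) :=
    Nat.mul_le_mul_right _ (hL v)
  have hdm := Nat.div_add_mod (G.degree v) k
  have hml := Nat.mod_lt (G.degree v) hk
  have hmul : k * (G.degree v / k + 1) = k * (G.degree v / k) + k := by ring
  rw [hd] at hsum
  linarith

/-- Any `L`-colouring of `G` minimizing the number of monochromatic edges has the
property that every vertex `v` has at most `⌊deg(v)/k⌋` neighbours with the same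
colour as `v`, whenever `L` is a `k`-list assignment with `k > 0`. -/
theorem min_monochromatic_list_colouring_has_small_defect
    {V : Type*} [Fintype V] [DecidableEq V]
    (G : SimpleGraph V) [DecidableRel G.Adj]
    (k : ℕ) (hk : 0 < k)
    (L : V → Finset ℕ) (hL : ∀ v, k ≤ (L v).card)
    (c : V → ℕ) (hc : ∀ v, c v ∈ L v)
    (hmin : ∀ c' : V → ℕ, (∀ v, c' v ∈ L v) →
      (G.edgeFinset.filter (fun e => (e.map c).IsDiag)).card ≤
        (G.edgeFinset.filter (fun e => (e.map c').IsDiag)).card) :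
    ∀ v, ((G.neighborFinset v).filter (fun w => c w = c v)).card ≤ G.degree v / k := by
  intro v
  by_contra hbig
  push_neg at hbig
  obtain ⟨a, ha, hale⟩ := pigeon G k hk L hL c v
  set c' : V → ℕ := Function.update c v a with hc'def
  have hc' : ∀ u, c' u ∈ L u := by
    intro u
    by_cases hu : u = v
    · subst hu; simp [hc'def, ha]
    · simp [hc'def, Function.update_of_ne hu, hc u]
  have hA : (G.edgeFinset.filter (fun e => v ∉ e ∧ (e.map c).IsDiag))
      = (G.edgeFinset.filter (fun e => v ∉ e ∧ (e.map c').IsDiag)) := by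
    apply Finset.filter_congr
    intro e _
    induction e using Sym2.ind with
    | _ x y =>
      simp only [Sym2.mem_iff, not_or, Sym2.map_pair_eq, Sym2.mk_isDiag_iff]
      constructor
      · rintro ⟨⟨h1x, h1y⟩, h2⟩
        refine ⟨⟨h1x, h1y⟩, ?_⟩
        simp only [hc'def, Function.update_of_ne (Ne.symm h1x),
          Function.update_of_ne (Ne.symm h1y)]
        exact h2
      · rintro ⟨⟨h1x, h1y⟩, h2⟩
        refine ⟨⟨h1x, h1y⟩, ?_⟩
        rw [hc'def] at h2
        rwa [Function.update_of_ne (Ne.symm h1x), Function.update_of_ne (Ne.symm h1y)] at h2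
  have hB' : ((G.neighborFinset v).filter (fun w => c' w = c' v))
      = ((G.neighborFinset v).filter (fun w => c w = a)) := by
    apply Finset.filter_congr
    intro w hw
    have hne : w ≠ v := (SimpleGraph.mem_neighborFinset _ _ _ |>.mp hw).ne'
    simp [hc'def, Function.update_of_ne hne]
  have h1 := mono_split G c v
  have h2 := mono_split G c' v
  have hmin' := hmin c' hc'
  rw [h1, h2, hA, hB'] at hmin'
  omega
end

section
/- For every integer t > 0, every finite simple graph G with maximum degree at most 2t − 1 is (t,1)-choosable. -/
open Finset

/-- For every integer `t > 0`, every finite simple graph `G` with maximum degree at most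
`2t − 1` is `(t,1)`-choosable. -/
theorem maxDegree_le_two_t_sub_one_choosable_defect_one
    {V : Type*} [Fintype V] [DecidableEq V]
    (G : SimpleGraph V) [DecidableRel G.Adj]
    (t : ℕ) (ht : 0 < t) (hΔ : G.maxDegree ≤ 2 * t - 1) :
    ∀ L : V → Finset ℕ, (∀ v, t ≤ (L v).card) →
      ∃ c : V → ℕ, (∀ v, c v ∈ L v) ∧
        ∀ v, ((G.neighborFinset v).filter (fun w => c w = c v)).card ≤ 1 := by
  intro L hL
  set N : V → Finset V := fun v => G.neighborFinset v with hN
  set d : (V → ℕ) → V → ℕ := fun c v => ((N v).filter (fun w => c w = c v)).card with hd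
  set W : (V → ℕ) → ℕ := fun c => ∑ u, d c u with hW
  have hne : (Fintype.piFinset L).Nonempty := by
    rw [Fintype.piFinset_nonempty]
    intro v
    exact Finset.card_pos.mp (lt_of_lt_of_le ht (hL v))
  obtain ⟨c, hcS, hmin⟩ := Finset.exists_min_image (Fintype.piFinset L) W hne
  have hcL : ∀ v, c v ∈ L v := by
    intro v
    exact (Fintype.mem_piFinset.mp hcS) v
  refine ⟨c, hcL, ?_⟩
  by_contra hbad
  push_neg at hbad
  obtain ⟨v, hv⟩ := hbad
  have hv2 : 2 ≤ d c v := hv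
  have hvnot : v ∉ N v := by simp [hN]
  -- find a color b ∈ L v used by at most one neighbor of v
  have hex : ∃ b ∈ L v, ((N v).filter (fun w => c w = b)).card ≤ 1 := by
    by_contra h
    push_neg at h
    have hfib : ((N v).filter (fun w => c w ∈ L v)).card
        = ∑ b ∈ L v, (((N v).filter (fun w => c w ∈ L v)).filter (fun w => c w = b)).card := by
      apply Finset.card_eq_sum_card_fiberwise
      intro x hx
      exact (Finset.mem_filter.mp hx).2
    have hsum : ∑ b ∈ L v, ((N v).filter (fun w => c w = b)).card ≤ (N v).card := by
      calc ∑ b ∈ L v, ((N v).filter (fun w => c w = b)).card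
          = ∑ b ∈ L v, (((N v).filter (fun w => c w ∈ L v)).filter (fun w => c w = b)).card := by
            apply Finset.sum_congr rfl
            intro b hb
            congr 1
            rw [Finset.filter_filter]
            apply Finset.filter_congr
            intro w _
            constructor
            · intro hw; exact ⟨hw ▸ hb, hw⟩
            · intro hw; exact hw.2
        _ = ((N v).filter (fun w => c w ∈ L v)).card := hfib.symm
        _ ≤ (N v).card := Finset.card_filter_le _ _
    have hbig : 2 * (L v).card ≤ ∑ b ∈ L v, ((N v).filter (fun w => c w = b)).card := by
      calc 2 * (L v).card = ∑ _b ∈ L v, 2 := by rw [Finset.sum_const, smul_eq_mul, mul_comm]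
        _ ≤ _ := Finset.sum_le_sum (fun b hb => h b hb)
    have hdeg : (N v).card ≤ 2 * t - 1 := by
      have := G.degree_le_maxDegree v
      rw [← G.card_neighborFinset_eq_degree v] at this
      exact le_trans this hΔ
    have := hL v
    omega
  obtain ⟨b, hbL, hb1⟩ := hex
  set c' := Function.update c v b with hc'
  have hagree : ∀ w, w ≠ v → c' w = c w := fun w hw => Function.update_of_ne hw _ _
  have hc'v : c' v = b := Function.update_self v b c
  have hc'S : c' ∈ Fintype.piFinset L := by
    rw [Fintype.mem_piFinset]
    intro u
    by_cases h : u = v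
    · subst h; rw [hc'v]; exact hbL
    · rw [hagree u h]; exact hcL u
  -- d c' v ≤ 1
  have hd'v : d c' v ≤ 1 := by
    have : (N v).filter (fun w => c' w = c' v) = (N v).filter (fun w => c w = b) := by
      apply Finset.filter_congr
      intro w hw
      rw [hagree w (fun hwv => hvnot (hwv ▸ hw)), hc'v]
    show ((N v).filter (fun w => c' w = c' v)).card ≤ 1
    rw [this]
    exact hb1
  -- splitting helper
  have split : ∀ (s : Finset V) (g : V → ℕ),
      ∑ w ∈ s, g w = (∑ w ∈ s.erase v, g w) + (if v ∈ s then g v else 0) := by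
    intro s g
    by_cases h : v ∈ s
    · rw [if_pos h, Finset.sum_erase_add s g h]
    · rw [if_neg h, Finset.erase_eq_of_notMem h, add_zero]
  -- d as a sum
  have dsum : ∀ (f : V → ℕ) (u : V), d f u = ∑ w ∈ N u, (if f w = f u then 1 else 0) := by
    intro f u
    show ((N u).filter (fun w => f w = f u)).card = _
    exact Finset.card_filter _ _
  -- key expansion: W f = R + 2 * d f v for any f agreeing with c off v
  have expand : ∀ f : V → ℕ, (∀ w, w ≠ v → f w = c w) →
      W f = (∑ u ∈ univ.erase v, ∑ w ∈ (N u).erase v, (if c w = c u then 1 else 0))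
        + 2 * d f v := by
    intro f hf
    have step1 : W f = (∑ u ∈ univ.erase v, d f u) + d f v := by
      rw [hW]
      simpa using split univ (d f)
    have step2 : ∀ u ∈ univ.erase v,
        d f u = (∑ w ∈ (N u).erase v, (if c w = c u then 1 else 0))
          + (if v ∈ N u then (if f v = c u then 1 else 0) else 0) := by
      intro u hu
      have huv : u ≠ v := Finset.ne_of_mem_erase hu
      rw [dsum f u, split (N u) (fun w => if f w = f u then 1 else 0)]
      congr 1
      · apply Finset.sum_congr rfl
        intro w hw
        rw [hf w (Finset.ne_of_mem_erase hw), hf u huv]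
      · rw [hf u huv]
    have step3 : (∑ u ∈ univ.erase v, (if v ∈ N u then (if f v = c u then 1 else 0) else 0))
        = d f v := by
      have e1 : ∀ u : V, v ∈ N u ↔ u ∈ N v := by
        intro u
        simp only [hN, SimpleGraph.mem_neighborFinset]
        exact ⟨fun h => h.symm, fun h => h.symm⟩
      have e2 : (∑ u ∈ univ.erase v, (if v ∈ N u then (if f v = c u then 1 else 0) else 0))
          = ∑ u ∈ univ, (if u ∈ N v then (if f v = c u then 1 else 0) else 0) := by
        rw [split univ (fun u => if u ∈ N v then (if f v = c u then 1 else 0) else 0)]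
        simp only [Finset.mem_univ, if_true, if_neg hvnot, add_zero]
        apply Finset.sum_congr rfl
        intro u hu
        exact if_congr (e1 u) rfl rfl
      rw [e2, Finset.sum_ite_mem, Finset.univ_inter, dsum f v]
      apply Finset.sum_congr rfl
      intro w hw
      have hwv : w ≠ v := fun h => hvnot (h ▸ hw)
      rw [hf w hwv]
      by_cases h : c w = f v
      · rw [if_pos h, if_pos h.symm]
      · rw [if_neg h, if_neg (fun h' => h h'.symm)]
    rw [step1, Finset.sum_congr rfl step2, Finset.sum_add_distrib, step3]
    ring
  have keyc : W c = (∑ u ∈ univ.erase v, ∑ w ∈ (N u).erase v, (if c w = c u then 1 else 0))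
      + 2 * d c v := expand c (fun _ _ => rfl)
  have keyc' : W c' = (∑ u ∈ univ.erase v, ∑ w ∈ (N u).erase v, (if c w = c u then 1 else 0))
      + 2 * d c' v := expand c' hagree
  have hlt : W c' < W c := by omega
  exact absurd (hmin c' hc'S) (by omega)
end

section
/- Let t be a positive integer, G a finite simple graph, L a t-list assignment of G, and v, w two adjacent vertices of G with deg(v) = t and deg(w) = t. If the graph G − {v, w} admits an L-colouring with defect at most 1, then G admits an L-colouring with defect at most 1. -/
/-- Let `t > 0`, `L` a `t`-list assignment of `G`, and `v, w` adjacent vertices of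
degree `t`. If `G − {v, w}` admits an `L`-colouring with defect at most 1, then so
does `G`. -/
theorem extend_defect_one_colouring_over_adjacent_degree_t_pair
    {V : Type*} [Fintype V] [DecidableEq V]
    (G : SimpleGraph V) [DecidableRel G.Adj]
    (t : ℕ) (ht : 0 < t)
    (L : V → Finset ℕ) (hL : ∀ x, t ≤ (L x).card)
    (v w : V) (hvw : G.Adj v w)
    (hdv : G.degree v = t) (hdw : G.degree w = t)
    (hGvw : ∃ c : V → ℕ, (∀ x, x ≠ v → x ≠ w → c x ∈ L x) ∧
      ∀ x, x ≠ v → x ≠ w →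
        ((G.neighborFinset x).filter (fun u => u ≠ v ∧ u ≠ w ∧ c u = c x)).card ≤ 1) :
    ∃ c : V → ℕ, (∀ x, c x ∈ L x) ∧
      ∀ x, ((G.neighborFinset x).filter (fun u => c u = c x)).card ≤ 1 := by
  obtain ⟨c, hc, hd⟩ := hGvw
  have hvw' : v ≠ w := hvw.ne
  -- available colours for v and w
  have key : ∀ p q : V, G.Adj p q → G.degree p = t →
      (L p \ ((G.neighborFinset p).erase q).image c).Nonempty := by
    intro p q hpq hdp
    rw [← Finset.card_pos]
    have h1 : (((G.neighborFinset p).erase q).image c).card ≤ t - 1 := by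
      calc (((G.neighborFinset p).erase q).image c).card
          ≤ ((G.neighborFinset p).erase q).card := Finset.card_image_le
        _ = (G.neighborFinset p).card - 1 :=
            Finset.card_erase_of_mem (by simpa using hpq)
        _ = t - 1 := by rw [G.card_neighborFinset_eq_degree, hdp]
    have h2 := hL p
    have h3 := Finset.le_card_sdiff (((G.neighborFinset p).erase q).image c) (L p)
    omega
  obtain ⟨a, ha⟩ := key v w hvw hdv
  obtain ⟨b, hb⟩ := key w v hvw.symm hdw
  rw [Finset.mem_sdiff] at ha hb
  -- `a` differs from colours of neighbours of v other than w; similarly for b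
  have hav : ∀ u, u ∈ G.neighborFinset v → u ≠ w → c u ≠ a := by
    intro u hu huw h
    exact ha.2 (Finset.mem_image.mpr ⟨u, Finset.mem_erase.mpr ⟨huw, hu⟩, h⟩)
  have hbw : ∀ u, u ∈ G.neighborFinset w → u ≠ v → c u ≠ b := by
    intro u hu huv h
    exact hb.2 (Finset.mem_image.mpr ⟨u, Finset.mem_erase.mpr ⟨huv, hu⟩, h⟩)
  refine ⟨fun x => if x = v then a else if x = w then b else c x, ?_, ?_⟩
  · intro x
    by_cases hxv : x = v
    · subst hxv; simpa using ha.1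
    · by_cases hxw : x = w
      · subst hxw; simp [hxv, hb.1]
      · simp only [if_neg hxv, if_neg hxw]
        exact hc x hxv hxw
  · intro x
    by_cases hxv : x = v
    · subst hxv
      have hsub : (G.neighborFinset x).filter
          (fun u => (if u = x then a else if u = w then b else c u) =
            (if x = x then a else if x = w then b else c x)) ⊆ {w} := by
        intro u hu
        rw [Finset.mem_filter] at hu
        obtain ⟨hu1, hu2⟩ := hu
        simp only [if_pos rfl] at hu2
        have huv : u ≠ x := G.ne_of_adj (by simpa [SimpleGraph.adj_comm] using hu1)
        by_contra huw
        rw [Finset.mem_singleton] at huw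
        rw [if_neg huv, if_neg huw] at hu2
        exact hav u hu1 huw hu2
      exact le_trans (Finset.card_le_card hsub) (by simp)
    · by_cases hxw : x = w
      · subst hxw
        have hsub : (G.neighborFinset x).filter
            (fun u => (if u = v then a else if u = x then b else c u) =
              (if x = v then a else if x = x then b else c x)) ⊆ {v} := by
          intro u hu
          rw [Finset.mem_filter] at hu
          obtain ⟨hu1, hu2⟩ := hu
          simp only [if_neg (Ne.symm hvw'), if_pos rfl] at hu2
          have huw : u ≠ x := G.ne_of_adj (by simpa [SimpleGraph.adj_comm] using hu1)
          by_contra huv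
          rw [Finset.mem_singleton] at huv
          rw [if_neg huv, if_neg huw] at hu2
          exact hbw u hu1 huv hu2
        exact le_trans (Finset.card_le_card hsub) (by simp)
      · have hsub : (G.neighborFinset x).filter
            (fun u => (if u = v then a else if u = w then b else c u) =
              (if x = v then a else if x = w then b else c x)) ⊆
            (G.neighborFinset x).filter (fun u => u ≠ v ∧ u ≠ w ∧ c u = c x) := by
          intro u hu
          rw [Finset.mem_filter] at hu ⊢
          obtain ⟨hu1, hu2⟩ := hu
          simp only [if_neg hxv, if_neg hxw] at hu2
          have huv : u ≠ v := by
            rintro rfl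
            rw [if_pos rfl] at hu2
            exact hav x (by simpa [SimpleGraph.adj_comm] using (G.mem_neighborFinset x u).mp hu1) hxw hu2.symm
          have huw : u ≠ w := by
            rintro rfl
            rw [if_neg hvw'.symm, if_pos rfl] at hu2
            exact hbw x (by simpa [SimpleGraph.adj_comm] using (G.mem_neighborFinset x u).mp hu1) hxv hu2.symm
          rw [if_neg huv, if_neg huw] at hu2
          exact ⟨hu1, huv, huw, hu2⟩
        exact le_trans (Finset.card_le_card hsub) (hd x hxv hxw)
end

section
/- Let t be a positive integer, G a finite simple graph, L a t-list assignment of G, and let v, w, u be three pairwise adjacent vertices of G with deg(v) = t, deg(w) = t + 1 and deg(u) = t + 1. If the graph G − {v, w, u} admits an L-colouring with defect at most 1, then G admits an L-colouring with defect at most 1. -/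
lemma pick_of_card_lt {α : Type*} [DecidableEq α] {s t : Finset α}
    (h : s.card < t.card) : ∃ a ∈ t, a ∉ s := by
  have h2 : 0 < (t \ s).card := lt_of_lt_of_le (Nat.sub_pos_of_lt h) (Finset.le_card_sdiff s t)
  obtain ⟨a, ha⟩ := Finset.card_pos.mp h2
  exact ⟨a, (Finset.mem_sdiff.mp ha).1, (Finset.mem_sdiff.mp ha).2⟩

/-- Let `t > 0`, `L` a `t`-list assignment of `G`, and `v, w, u` pairwise adjacent with
`deg(v) = t`, `deg(w) = t + 1`, `deg(u) = t + 1`. If `G − {v, w, u}` admits an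
`L`-colouring with defect at most 1, then so does `G`. -/
theorem extend_defect_one_colouring_over_triangle
    {V : Type*} [Fintype V] [DecidableEq V]
    (G : SimpleGraph V) [DecidableRel G.Adj]
    (t : ℕ) (ht : 0 < t)
    (L : V → Finset ℕ) (hL : ∀ x, t ≤ (L x).card)
    (v w u : V) (hvw : G.Adj v w) (hvu : G.Adj v u) (hwu : G.Adj w u)
    (hdv : G.degree v = t) (hdw : G.degree w = t + 1) (hdu : G.degree u = t + 1)
    (hGvwu : ∃ c : V → ℕ, (∀ x, x ≠ v → x ≠ w → x ≠ u → c x ∈ L x) ∧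
      ∀ x, x ≠ v → x ≠ w → x ≠ u →
        ((G.neighborFinset x).filter
          (fun y => y ≠ v ∧ y ≠ w ∧ y ≠ u ∧ c y = c x)).card ≤ 1) :
    ∃ c : V → ℕ, (∀ x, c x ∈ L x) ∧
      ∀ x, ((G.neighborFinset x).filter (fun y => c y = c x)).card ≤ 1 := by
  classical
  obtain ⟨c, hc1, hc2⟩ := hGvwu
  have hvwne : v ≠ w := hvw.ne
  have hvune : v ≠ u := hvu.ne
  have hwune : w ≠ u := hwu.ne
  have hvmemw : v ∈ G.neighborFinset w := (SimpleGraph.mem_neighborFinset _ _ _).mpr hvw.symm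
  have humemw : u ∈ G.neighborFinset w := (SimpleGraph.mem_neighborFinset _ _ _).mpr hwu
  have hvmemu : v ∈ G.neighborFinset u := (SimpleGraph.mem_neighborFinset _ _ _).mpr hvu.symm
  have hwmemu : w ∈ G.neighborFinset u := (SimpleGraph.mem_neighborFinset _ _ _).mpr hwu.symm
  have hwmemv : w ∈ G.neighborFinset v := (SimpleGraph.mem_neighborFinset _ _ _).mpr hvw
  have humemv : u ∈ G.neighborFinset v := (SimpleGraph.mem_neighborFinset _ _ _).mpr hvu
  have hnself : ∀ a y : V, y ∈ G.neighborFinset a → y ≠ a := by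
    intro a y hy h
    subst h
    exact G.irrefl ((SimpleGraph.mem_neighborFinset _ _ _).mp hy)
  -- colours of external neighbours of w and u
  set Cw : Finset ℕ :=
    ((G.neighborFinset w).filter (fun y => y ≠ v ∧ y ≠ u)).image c with hCwdef
  set Cu : Finset ℕ :=
    ((G.neighborFinset u).filter (fun y => y ≠ v ∧ y ≠ w)).image c with hCudef
  have hCwcard : Cw.card < t := by
    have hsub : (G.neighborFinset w).filter (fun y => y ≠ v ∧ y ≠ u)
        ⊆ ((G.neighborFinset w).erase v).erase u := by
      intro y hy
      rw [Finset.mem_filter] at hy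
      exact Finset.mem_erase.mpr ⟨hy.2.2, Finset.mem_erase.mpr ⟨hy.2.1, hy.1⟩⟩
    have h2 : (((G.neighborFinset w).erase v).erase u).card = t - 1 := by
      rw [Finset.card_erase_of_mem (Finset.mem_erase.mpr ⟨Ne.symm hvune, humemw⟩),
        Finset.card_erase_of_mem hvmemw, SimpleGraph.card_neighborFinset_eq_degree, hdw]
      omega
    have h3 : Cw.card ≤ t - 1 := by
      calc Cw.card ≤ ((G.neighborFinset w).filter (fun y => y ≠ v ∧ y ≠ u)).card :=
            Finset.card_image_le
        _ ≤ (((G.neighborFinset w).erase v).erase u).card := Finset.card_le_card hsub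
        _ = t - 1 := h2
    omega
  have hCucard : Cu.card < t := by
    have hsub : (G.neighborFinset u).filter (fun y => y ≠ v ∧ y ≠ w)
        ⊆ ((G.neighborFinset u).erase v).erase w := by
      intro y hy
      rw [Finset.mem_filter] at hy
      exact Finset.mem_erase.mpr ⟨hy.2.2, Finset.mem_erase.mpr ⟨hy.2.1, hy.1⟩⟩
    have h2 : (((G.neighborFinset u).erase v).erase w).card = t - 1 := by
      rw [Finset.card_erase_of_mem (Finset.mem_erase.mpr ⟨Ne.symm hvwne, hwmemu⟩),
        Finset.card_erase_of_mem hvmemu, SimpleGraph.card_neighborFinset_eq_degree, hdu]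
      omega
    have h3 : Cu.card ≤ t - 1 := by
      calc Cu.card ≤ ((G.neighborFinset u).filter (fun y => y ≠ v ∧ y ≠ w)).card :=
            Finset.card_image_le
        _ ≤ (((G.neighborFinset u).erase v).erase w).card := Finset.card_le_card hsub
        _ = t - 1 := h2
    omega
  obtain ⟨cw, hcwL, hcwCw⟩ := pick_of_card_lt (lt_of_lt_of_le hCwcard (hL w))
  obtain ⟨cu, hcuL, hcuCu⟩ := pick_of_card_lt (lt_of_lt_of_le hCucard (hL u))
  -- colouring with w, u coloured
  set d0 : V → ℕ := fun x => if x = w then cw else if x = u then cu else c x with hd0def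
  have hd0w : d0 w = cw := by simp [hd0def]
  have hd0u : d0 u = cu := by simp [hd0def, Ne.symm hwune]
  have hd0ext : ∀ x, x ≠ w → x ≠ u → d0 x = c x := by
    intro x h1 h2; simp [hd0def, h1, h2]
  -- forbidden colours for v
  set Frep : Finset ℕ := ((G.neighborFinset v).image d0).filter
      (fun β => 2 ≤ ((G.neighborFinset v).filter (fun y => d0 y = β)).card) with hFrepdef
  set Fsat : Finset ℕ := ((G.neighborFinset v).filter (fun y => y ≠ w ∧ y ≠ u ∧
      ((G.neighborFinset y).filter
        (fun z => z ≠ v ∧ z ≠ w ∧ z ≠ u ∧ c z = c y)).Nonempty)).image c with hFsatdef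
  set F := Frep ∪ Fsat with hFdef
  have hFcard : F.card < t := by
    have hsub : F ⊆ ((G.neighborFinset v).erase w).image d0 := by
      intro β hβ
      rw [hFdef, Finset.mem_union] at hβ
      rcases hβ with hβ | hβ
      · rw [hFrepdef, Finset.mem_filter] at hβ
        obtain ⟨hβ1, hβ2⟩ := hβ
        obtain ⟨a, ha, b, hb, hab⟩ := Finset.one_lt_card.mp hβ2
        rw [Finset.mem_filter] at ha hb
        by_cases haw : a = w
        · have hbw : b ≠ w := fun h => hab (haw.trans h.symm)
          exact Finset.mem_image.mpr ⟨b, Finset.mem_erase.mpr ⟨hbw, hb.1⟩, hb.2⟩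
        · exact Finset.mem_image.mpr ⟨a, Finset.mem_erase.mpr ⟨haw, ha.1⟩, ha.2⟩
      · rw [hFsatdef] at hβ
        obtain ⟨y, hy, hcy⟩ := Finset.mem_image.mp hβ
        rw [Finset.mem_filter] at hy
        refine Finset.mem_image.mpr ⟨y, Finset.mem_erase.mpr ⟨hy.2.1, hy.1⟩, ?_⟩
        rw [hd0ext y hy.2.1 hy.2.2.1]; exact hcy
    have h3 : F.card ≤ t - 1 := by
      calc F.card ≤ (((G.neighborFinset v).erase w).image d0).card := Finset.card_le_card hsub
        _ ≤ ((G.neighborFinset v).erase w).card := Finset.card_image_le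
        _ = t - 1 := by
            rw [Finset.card_erase_of_mem hwmemv, SimpleGraph.card_neighborFinset_eq_degree, hdv]
    omega
  obtain ⟨cv, hcvL, hcvF⟩ := pick_of_card_lt (lt_of_lt_of_le hFcard (hL v))
  have hcvFrep : cv ∉ Frep := fun h => hcvF (Finset.mem_union_left _ h)
  have hcvFsat : cv ∉ Fsat := fun h => hcvF (Finset.mem_union_right _ h)
  -- the final colouring
  set d : V → ℕ := fun x => if x = v then cv else d0 x with hddef
  have hdfv : d v = cv := by simp [hddef]
  have hdfw : d w = cw := by simp [hddef, Ne.symm hvwne, hd0w]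
  have hdfu : d u = cu := by simp [hddef, Ne.symm hvune, hd0u]
  have hdfext : ∀ x, x ≠ v → x ≠ w → x ≠ u → d x = c x := by
    intro x h1 h2 h3
    simp only [hddef, if_neg h1]
    exact hd0ext x h2 h3
  -- cv, cw, cu cannot all be equal
  have hnb : ∀ α : ℕ, cv = α → cw = α → cu = α → False := by
    intro α h1 h2 h3
    apply hcvFrep
    rw [hFrepdef, Finset.mem_filter]
    have hwfil : w ∈ (G.neighborFinset v).filter (fun y => d0 y = cv) :=
      Finset.mem_filter.mpr ⟨hwmemv, by rw [hd0w, h2, h1]⟩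
    have hufil : u ∈ (G.neighborFinset v).filter (fun y => d0 y = cv) :=
      Finset.mem_filter.mpr ⟨humemv, by rw [hd0u, h3, h1]⟩
    constructor
    · exact Finset.mem_image.mpr ⟨w, hwmemv, by rw [hd0w, h2, h1]⟩
    · have hsub2 : ({w, u} : Finset V) ⊆ (G.neighborFinset v).filter (fun y => d0 y = cv) := by
        intro y hy
        rcases Finset.mem_insert.mp hy with rfl | hy
        · exact hwfil
        · rw [Finset.mem_singleton] at hy; subst hy; exact hufil
      calc 2 = ({w, u} : Finset V).card := (Finset.card_pair hwune).symm
        _ ≤ _ := Finset.card_le_card hsub2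
  refine ⟨d, ?_, ?_⟩
  · intro x
    by_cases h1 : x = v
    · rw [h1, hdfv]; exact hcvL
    by_cases h2 : x = w
    · rw [h2, hdfw]; exact hcwL
    by_cases h3 : x = u
    · rw [h3, hdfu]; exact hcuL
    rw [hdfext x h1 h2 h3]
    exact hc1 x h1 h2 h3
  · intro x
    by_cases h1 : x = v
    · -- vertex v
      rw [h1]
      have hfeq : (G.neighborFinset v).filter (fun y => d y = d v)
          = (G.neighborFinset v).filter (fun y => d0 y = cv) := by
        apply Finset.filter_congr
        intro y hy
        have hyv : y ≠ v := hnself v y hy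
        simp [hddef, hyv]
      rw [hfeq]
      by_contra hcon
      push_neg at hcon
      apply hcvFrep
      rw [hFrepdef, Finset.mem_filter]
      obtain ⟨a, ha⟩ := Finset.card_pos.mp (lt_trans one_pos hcon)
      have ha' := Finset.mem_filter.mp ha
      exact ⟨Finset.mem_image.mpr ⟨a, ha'.1, ha'.2⟩, hcon⟩
    by_cases h2 : x = w
    · -- vertex w
      rw [h2]
      have hsub : (G.neighborFinset w).filter (fun y => d y = d w) ⊆ {v, u} := by
        intro y hy
        rw [Finset.mem_filter] at hy
        by_contra hy2
        simp only [Finset.mem_insert, Finset.mem_singleton, not_or] at hy2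
        have hyw : y ≠ w := hnself w y hy.1
        have hdy : d y = c y := hdfext y hy2.1 hyw hy2.2
        apply hcwCw
        rw [hCwdef]
        have hcycw : c y = cw := by rw [← hdy, hy.2, hdfw]
        exact Finset.mem_image.mpr ⟨y, Finset.mem_filter.mpr ⟨hy.1, hy2.1, hy2.2⟩, hcycw⟩
      rw [Finset.card_le_one]
      intro a ha b hb
      have ha2 := hsub ha
      have hb2 := hsub hb
      simp only [Finset.mem_insert, Finset.mem_singleton] at ha2 hb2
      have hkey : ¬ (v ∈ (G.neighborFinset w).filter (fun y => d y = d w) ∧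
          u ∈ (G.neighborFinset w).filter (fun y => d y = d w)) := by
        rintro ⟨hv', hu'⟩
        have h1 := (Finset.mem_filter.mp hv').2
        have h2 := (Finset.mem_filter.mp hu').2
        rw [hdfv, hdfw] at h1
        rw [hdfu, hdfw] at h2
        exact hnb cw h1 rfl h2
      rcases ha2 with rfl | rfl <;> rcases hb2 with rfl | rfl
      · rfl
      · exact absurd ⟨ha, hb⟩ hkey
      · exact absurd ⟨hb, ha⟩ hkey
      · rfl
    by_cases h3 : x = u
    · -- vertex u
      rw [h3]
      have hsub : (G.neighborFinset u).filter (fun y => d y = d u) ⊆ {v, w} := by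
        intro y hy
        rw [Finset.mem_filter] at hy
        by_contra hy2
        simp only [Finset.mem_insert, Finset.mem_singleton, not_or] at hy2
        have hyu : y ≠ u := hnself u y hy.1
        have hdy : d y = c y := hdfext y hy2.1 hy2.2 hyu
        apply hcuCu
        rw [hCudef]
        have hcycu : c y = cu := by rw [← hdy, hy.2, hdfu]
        exact Finset.mem_image.mpr ⟨y, Finset.mem_filter.mpr ⟨hy.1, hy2.1, hy2.2⟩, hcycu⟩
      rw [Finset.card_le_one]
      intro a ha b hb
      have ha2 := hsub ha
      have hb2 := hsub hb
      simp only [Finset.mem_insert, Finset.mem_singleton] at ha2 hb2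
      have hkey : ¬ (v ∈ (G.neighborFinset u).filter (fun y => d y = d u) ∧
          w ∈ (G.neighborFinset u).filter (fun y => d y = d u)) := by
        rintro ⟨hv', hw'⟩
        have h1 := (Finset.mem_filter.mp hv').2
        have h2 := (Finset.mem_filter.mp hw').2
        rw [hdfv, hdfu] at h1
        rw [hdfw, hdfu] at h2
        exact hnb cu h1 h2 rfl
      rcases ha2 with rfl | rfl <;> rcases hb2 with rfl | rfl
      · rfl
      · exact absurd ⟨ha, hb⟩ hkey
      · exact absurd ⟨hb, ha⟩ hkey
      · rfl
    · -- external vertex x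
      have hdx : d x = c x := hdfext x h1 h2 h3
      have hnw : ∀ y ∈ (G.neighborFinset x).filter (fun y => d y = d x), y ≠ w := by
        intro y hy hyw
        rw [hyw] at hy
        have hy' := Finset.mem_filter.mp hy
        have hcwx : cw = c x := by rw [← hdfw, hy'.2, hdx]
        apply hcwCw
        rw [hCwdef, hcwx]
        have hxNw : x ∈ G.neighborFinset w :=
          (SimpleGraph.mem_neighborFinset _ _ _).mpr
            ((SimpleGraph.mem_neighborFinset _ _ _).mp hy'.1).symm
        exact Finset.mem_image.mpr ⟨x, Finset.mem_filter.mpr ⟨hxNw, h1, h3⟩, rfl⟩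
      have hnu : ∀ y ∈ (G.neighborFinset x).filter (fun y => d y = d x), y ≠ u := by
        intro y hy hyu
        rw [hyu] at hy
        have hy' := Finset.mem_filter.mp hy
        have hcux : cu = c x := by rw [← hdfu, hy'.2, hdx]
        apply hcuCu
        rw [hCudef, hcux]
        have hxNu : x ∈ G.neighborFinset u :=
          (SimpleGraph.mem_neighborFinset _ _ _).mpr
            ((SimpleGraph.mem_neighborFinset _ _ _).mp hy'.1).symm
        exact Finset.mem_image.mpr ⟨x, Finset.mem_filter.mpr ⟨hxNu, h1, h2⟩, rfl⟩
      by_cases hvfil : v ∈ (G.neighborFinset x).filter (fun y => d y = d x)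
      · -- v is a conflicting neighbour of x; then x has no external conflict
        have hvx := Finset.mem_filter.mp hvfil
        have hcvx : cv = c x := by rw [← hdfv, hvx.2, hdx]
        have hxNv : x ∈ G.neighborFinset v :=
          (SimpleGraph.mem_neighborFinset _ _ _).mpr
            ((SimpleGraph.mem_neighborFinset _ _ _).mp hvx.1).symm
        have hTempty : ¬ ((G.neighborFinset x).filter
            (fun z => z ≠ v ∧ z ≠ w ∧ z ≠ u ∧ c z = c x)).Nonempty := by
          intro hne
          apply hcvFsat
          rw [hFsatdef]
          exact Finset.mem_image.mpr ⟨x, Finset.mem_filter.mpr ⟨hxNv, h2, h3, hne⟩, hcvx.symm⟩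
        have hsub : (G.neighborFinset x).filter (fun y => d y = d x) ⊆ {v} := by
          intro y hy
          rw [Finset.mem_singleton]
          by_contra hyv
          apply hTempty
          have hy' := Finset.mem_filter.mp hy
          have hyw := hnw y hy
          have hyu := hnu y hy
          have hcy : c y = c x := by rw [← hdfext y hyv hyw hyu, hy'.2, hdx]
          exact ⟨y, Finset.mem_filter.mpr ⟨hy'.1, hyv, hyw, hyu, hcy⟩⟩
        calc ((G.neighborFinset x).filter (fun y => d y = d x)).card
            ≤ ({v} : Finset V).card := Finset.card_le_card hsub
          _ = 1 := Finset.card_singleton v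
      · -- v is not a conflicting neighbour of x
        have hsub : (G.neighborFinset x).filter (fun y => d y = d x)
            ⊆ (G.neighborFinset x).filter (fun y => y ≠ v ∧ y ≠ w ∧ y ≠ u ∧ c y = c x) := by
          intro y hy
          have hy' := Finset.mem_filter.mp hy
          have hyv : y ≠ v := by rintro rfl; exact hvfil hy
          have hyw := hnw y hy
          have hyu := hnu y hy
          have hcy : c y = c x := by rw [← hdfext y hyv hyw hyu, hy'.2, hdx]
          exact Finset.mem_filter.mpr ⟨hy'.1, hyv, hyw, hyu, hcy⟩
        exact le_trans (Finset.card_le_card hsub) (hc2 x h1 h2 h3)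
end

section
/- Let t be a positive integer and G a finite simple graph such that: the minimum degree of G is at least t; the set of degree-t vertices is an independent set; and G contains no triangle v, w, u with deg(v) = t, deg(w) = t + 1 and deg(u) = t + 1. Let v be a vertex of degree exactly t whose neighbours admit a cyclic ordering v_1, v_2, …, v_t in which every two cyclically consecutive neighbours v_i, v_{i+1} are adjacent in G (as holds for every vertex of an edge-maximal graph embedded in a surface). Then v has at least ⌈t/2⌉ neighbours of degree at least t + 2. -/
/-!
Every neighbour of the degree-`t` vertex `v` has degree at least `t + 1`, since degree-`t`
vertices are independent. Two cyclically consecutive neighbours together with `v` form a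
triangle, so they cannot both have degree `t + 1`: the neighbours of degree at least `t + 2`
meet every consecutive pair of the cyclic order, and hence form at least half of it.
-/

open Finset

theorem Finset.card_le_two_mul_card_of_forall_mem_or_mem {α : Type*} [Fintype α]
    [DecidableEq α] {e : α → α} (he : Function.Injective e) (B : Finset α)
    (hB : ∀ i, i ∈ B ∨ e i ∈ B) : Fintype.card α ≤ 2 * #B := by
  have hcompl : #Bᶜ ≤ #B :=
    card_le_card_of_injOn e (fun i hi => (hB i).resolve_left (mem_compl.1 hi)) he.injOn
  rw [card_compl] at hcompl
  have := card_le_univ B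
  omega

namespace SimpleGraph

variable {V : Type*} [Fintype V] (G : SimpleGraph V) [DecidableRel G.Adj] {t : ℕ}

theorem succ_le_degree_of_adj (hmin : ∀ w, t ≤ G.degree w)
    (hind : ∀ a b, G.degree a = t → G.degree b = t → ¬ G.Adj a b)
    {v w : V} (hv : G.degree v = t) (hvw : G.Adj v w) : t + 1 ≤ G.degree w := by
  have hne : G.degree w ≠ t := fun hw => hind v w hv hw hvw
  have := hmin w
  omega

theorem add_two_le_degree_or_of_triangle (hmin : ∀ w, t ≤ G.degree w)
    (hind : ∀ a b, G.degree a = t → G.degree b = t → ¬ G.Adj a b)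
    (htri : ∀ a b c, G.Adj a b → G.Adj a c → G.Adj b c →
      ¬ (G.degree a = t ∧ G.degree b = t + 1 ∧ G.degree c = t + 1))
    {v a b : V} (hv : G.degree v = t) (ha : G.Adj v a) (hb : G.Adj v b) (hab : G.Adj a b) :
    t + 2 ≤ G.degree a ∨ t + 2 ≤ G.degree b := by
  have ha' := G.succ_le_degree_of_adj hmin hind hv ha
  have hb' := G.succ_le_degree_of_adj hmin hind hv hb
  by_contra! hlow
  exact htri v a b ha hb hab ⟨hv, by omega, by omega⟩

end SimpleGraph

theorem degree_t_vertex_has_many_high_degree_neighbours_general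
    {V : Type*} [Fintype V]
    (G : SimpleGraph V) [DecidableRel G.Adj]
    (t : ℕ)
    (hmin : ∀ w, t ≤ G.degree w)
    (hind : ∀ a b, G.degree a = t → G.degree b = t → ¬ G.Adj a b)
    (htri : ∀ a b c, G.Adj a b → G.Adj a c → G.Adj b c →
      ¬ (G.degree a = t ∧ G.degree b = t + 1 ∧ G.degree c = t + 1))
    (v : V) (hdv : G.degree v = t)
    (f : ZMod t → V)
    (hinj : Function.Injective f)
    (hmem : ∀ i, f i ∈ G.neighborFinset v)
    (hcyc : ∀ i, G.Adj (f i) (f (i + 1))) :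
    (t + 1) / 2 ≤ ((G.neighborFinset v).filter (fun w => t + 2 ≤ G.degree w)).card := by
  rcases t.eq_zero_or_pos with rfl | ht
  · simp
  have : NeZero t := ⟨ht.ne'⟩
  have hadj (i : ZMod t) : G.Adj v (f i) := (G.mem_neighborFinset v (f i)).1 (hmem i)
  set B : Finset (ZMod t) := univ.filter (fun i => t + 2 ≤ G.degree (f i))
  have hcover (i : ZMod t) : i ∈ B ∨ i + 1 ∈ B := by
    simpa [B] using
      G.add_two_le_degree_or_of_triangle hmin hind htri hdv (hadj i) (hadj (i + 1)) (hcyc i)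
  have hhalf := card_le_two_mul_card_of_forall_mem_or_mem (add_left_injective 1) B hcover
  rw [ZMod.card] at hhalf
  calc (t + 1) / 2 ≤ #B := by omega
    _ ≤ _ := card_le_card_of_injOn f
      (fun i hi => mem_filter.2 ⟨hmem i, (mem_filter.1 hi).2⟩) hinj.injOn

/-- Let `t > 0` and `G` have minimum degree at least `t`, with the degree-`t` vertices
independent, and no triangle with degrees `t`, `t+1`, `t+1`. If `v` has degree exactly
`t` and its neighbours admit a cyclic ordering in which consecutive neighbours are
adjacent, then `v` has at least `⌈t/2⌉` neighbours of degree at least `t + 2`. -/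
theorem degree_t_vertex_has_many_high_degree_neighbours
    {V : Type*} [Fintype V] [DecidableEq V]
    (G : SimpleGraph V) [DecidableRel G.Adj]
    (t : ℕ) (ht : 0 < t)
    (hmin : ∀ w, t ≤ G.degree w)
    (hind : ∀ a b, G.degree a = t → G.degree b = t → ¬ G.Adj a b)
    (htri : ∀ a b c, G.Adj a b → G.Adj a c → G.Adj b c →
      ¬ (G.degree a = t ∧ G.degree b = t + 1 ∧ G.degree c = t + 1))
    (v : V) (hdv : G.degree v = t)
    (f : ZMod t → V)
    (hinj : Function.Injective f)
    (hmem : ∀ i, f i ∈ G.neighborFinset v)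
    (hcyc : ∀ i, G.Adj (f i) (f (i + 1))) :
    (t + 1) / 2 ≤ ((G.neighborFinset v).filter (fun w => t + 2 ≤ G.degree w)).card :=
  degree_t_vertex_has_many_high_degree_neighbours_general G t hmin hind htri v hdv f hinj hmem hcyc
end

section
/- Let t be a positive integer and H' a finite simple graph with a vertex v that is adjacent to all other vertices of H', where H' has exactly t + 1 vertices. Let L be a list assignment of H' with |L(v)| ≥ t. Then every L-colouring of H' − v with defect at most 1 can be extended (assigning v a colour from L(v) and leaving all other colours unchanged) to an L-colouring of H' with defect at most 1. -/
/-- Let `t > 0` and `H'` a graph on exactly `t + 1` vertices with a vertex `v` adjacent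
to all other vertices, and `L` a list assignment with `|L(v)| ≥ t`. Then every
`L`-colouring of `H' − v` with defect at most 1 extends, by assigning `v` a colour from
`L(v)`, to an `L`-colouring of `H'` with defect at most 1. -/
theorem extend_defect_one_colouring_over_dominating_vertex
    {V : Type*} [Fintype V] [DecidableEq V]
    (H' : SimpleGraph V) [DecidableRel H'.Adj]
    (t : ℕ) (ht : 0 < t)
    (v : V) (hdom : ∀ w, w ≠ v → H'.Adj v w)
    (hcard : Fintype.card V = t + 1)
    (L : V → Finset ℕ) (hLv : t ≤ (L v).card)
    (c : V → ℕ) (hc : ∀ w, w ≠ v → c w ∈ L w)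
    (hdef : ∀ w, w ≠ v →
      ((H'.neighborFinset w).filter (fun u => u ≠ v ∧ c u = c w)).card ≤ 1) :
    ∃ c' : V → ℕ, c' v ∈ L v ∧ (∀ w, w ≠ v → c' w = c w) ∧
      ∀ w, ((H'.neighborFinset w).filter (fun u => c' u = c' w)).card ≤ 1 := by
  classical
  set S : Finset V := Finset.univ.erase v with hS
  have hScard : S.card = t := by
    rw [hS, Finset.card_erase_of_mem (Finset.mem_univ v), Finset.card_univ, hcard]; omega
  set Bad : Finset ℕ :=
    (S.image c).filter (fun a => 2 ≤ (S.filter (fun x => c x = a)).card) with hBadDef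
  have hsum : ∑ a ∈ S.image c, (S.filter (fun x => c x = a)).card = t := by
    rw [← Finset.card_eq_sum_card_image, hScard]
  have hBadcard : 2 * Bad.card ≤ t := by
    calc 2 * Bad.card = ∑ _a ∈ Bad, 2 := by simp [Nat.mul_comm]
      _ ≤ ∑ a ∈ Bad, (S.filter (fun x => c x = a)).card :=
          Finset.sum_le_sum (fun a ha => (Finset.mem_filter.mp ha).2)
      _ ≤ ∑ a ∈ S.image c, (S.filter (fun x => c x = a)).card :=
          Finset.sum_le_sum_of_subset (Finset.filter_subset _ _)
      _ = t := hsum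
  have hnotsub : ¬ (L v ⊆ Bad) := fun h => by
    have := Finset.card_le_card h; omega
  obtain ⟨a, haL, haBad⟩ := Finset.not_subset.mp hnotsub
  have hgood : (S.filter (fun x => c x = a)).card ≤ 1 := by
    by_cases h : a ∈ S.image c
    · by_contra h2
      exact haBad (Finset.mem_filter.mpr ⟨h, by omega⟩)
    · have he : S.filter (fun x => c x = a) = ∅ := by
        rw [Finset.filter_eq_empty_iff]
        intro x hx hcx
        exact h (Finset.mem_image.mpr ⟨x, hx, hcx⟩)
      simp [he]
  refine ⟨Function.update c v a, by simp [haL],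
    fun w hw => Function.update_of_ne hw _ _, ?_⟩
  intro w
  by_cases hwv : w = v
  · rw [hwv]
    have hsub : (H'.neighborFinset v).filter
        (fun u => Function.update c v a u = Function.update c v a v) ⊆
        S.filter (fun x => c x = a) := by
      intro u hu
      rw [Finset.mem_filter] at hu
      obtain ⟨hu1, hu2⟩ := hu
      have huv : u ≠ v := (H'.mem_neighborFinset v u |>.mp hu1).ne'
      rw [Function.update_of_ne huv, Function.update_self] at hu2
      exact Finset.mem_filter.mpr ⟨Finset.mem_erase.mpr ⟨huv, Finset.mem_univ u⟩, hu2⟩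
    exact le_trans (Finset.card_le_card hsub) hgood
  · have hcw : Function.update c v a w = c w := Function.update_of_ne hwv _ _
    by_cases hca : c w = a
    · -- w is the unique vertex of colour a; only v can share its colour
      have hsub : (H'.neighborFinset w).filter
          (fun u => Function.update c v a u = Function.update c v a w) ⊆ {v} := by
        intro u hu
        rw [Finset.mem_filter] at hu
        obtain ⟨hu1, hu2⟩ := hu
        have huw : u ≠ w := (H'.mem_neighborFinset w u |>.mp hu1).ne'
        by_contra huv'
        have huv : u ≠ v := by simpa using huv'
        rw [Function.update_of_ne huv, hcw, hca] at hu2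
        have hmem : u ∈ S.filter (fun x => c x = a) :=
          Finset.mem_filter.mpr ⟨Finset.mem_erase.mpr ⟨huv, Finset.mem_univ u⟩, hu2⟩
        have hmem' : w ∈ S.filter (fun x => c x = a) :=
          Finset.mem_filter.mpr ⟨Finset.mem_erase.mpr ⟨hwv, Finset.mem_univ w⟩, hca⟩
        have hpair : ({u, w} : Finset V) ⊆ S.filter (fun x => c x = a) := by
          intro x hx
          rcases Finset.mem_insert.mp hx with h | h
          · exact h ▸ hmem
          · exact (Finset.mem_singleton.mp h) ▸ hmem'
        have := Finset.card_le_card hpair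
        rw [Finset.card_pair huw] at this
        omega
      calc _ ≤ ({v} : Finset V).card := Finset.card_le_card hsub
        _ = 1 := Finset.card_singleton v
    · -- colour of w is not a, so v does not interfere
      have hsub : (H'.neighborFinset w).filter
          (fun u => Function.update c v a u = Function.update c v a w) ⊆
          (H'.neighborFinset w).filter (fun u => u ≠ v ∧ c u = c w) := by
        intro u hu
        rw [Finset.mem_filter] at hu ⊢
        obtain ⟨hu1, hu2⟩ := hu
        rw [hcw] at hu2
        have huv : u ≠ v := by
          rintro rfl
          rw [Function.update_self] at hu2
          exact hca hu2.symm
        rw [Function.update_of_ne huv] at hu2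
        exact ⟨hu1, huv, hu2⟩
      exact le_trans (Finset.card_le_card hsub) (hdef w hwv)
end

section
/- Let t ≥ 5 and μ ≥ 1 be integers, and let G be a finite simple graph with n vertices satisfying all of the following: (i) n ≥ 2t + 1; (ii) the sum of the vertex degrees of G is at most 6n + 6μ − 12; (iii) the minimum degree of G is at least t; (iv) G has a vertex of degree at least 2t; (v) every vertex v of degree at least t + 2 has at most ⌊deg(v)/2⌋ neighbours of degree t; (vi) every vertex of degree exactly t has at least ⌈t/2⌉ neighbours of degree at least t + 2; (vii) if t is even, then every vertex of degree exactly t that has exactly t/2 neighbours of degree at least t + 2 has at least one neighbour of degree at least t + 3. Then (2t + 2)(t − 5) < 6μ − 12. -/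
/-!
Give every vertex `v` the charge `deg v - 6`, so the total charge is at most `6μ - 12`. Every
vertex of degree at least `t + 2` sends to each neighbour of degree `t` the amount `2/(t + 1)`
if `t` is odd, and `2/(t + 2)`, or `4/(t + 2)` when its degree is at least `t + 3`, if `t` is
even. Conditions (v)–(vii) make every vertex end with charge at least `t - 5`, and a vertex of
degree at least `2t` with charge more than `2t - 10`. Hence the total charge exceeds
`(n - 1)(t - 5) + 2(t - 5) ≥ (2t + 2)(t - 5)`.
-/

open Finset

theorem sum_sub_sum_add_sum_swap {V M : Type*} [Fintype V] [AddCommGroup M]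
    (c : V → M) (T : V → V → M) :
    ∑ v, (c v - ∑ w, T v w + ∑ w, T w v) = ∑ v, c v := by
  rw [sum_add_distrib, sum_sub_distrib, Finset.sum_comm (f := T), sub_add_cancel]

theorem card_sub_one_mul_add_lt_sum {V R : Type*} [Fintype V] [Ring R] [PartialOrder R]
    [IsOrderedRing R] {g : V → R} {a b : R} {v₀ : V}
    (hle : ∀ v, a ≤ g v) (hlt : b < g v₀) :
    ((Fintype.card V : R) - 1) * a + b < ∑ v, g v := by
  classical
  have hrest : (#(univ.erase v₀) : R) * a ≤ ∑ v ∈ univ.erase v₀, g v := by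
    simpa only [nsmul_eq_mul] using card_nsmul_le_sum _ g a fun v _ => hle v
  rw [card_erase_of_mem (mem_univ v₀), card_univ,
    Nat.cast_sub (Fintype.card_pos_iff.mpr ⟨v₀⟩), Nat.cast_one] at hrest
  rw [← add_sum_erase _ _ (mem_univ v₀), add_comm (g v₀)]
  exact add_lt_add_of_le_of_lt hrest hlt

/-- The largest amounts a vertex of degree `t + 2` (or `t + 3`, for even `t`) can afford to
send to up to `⌊d/2⌋` neighbours while keeping charge `t - 5`; they are just enough for a
degree-`t` vertex to collect `1` under conditions (vi) and (vii). -/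
def dischargeRate (t d : ℕ) : ℚ :=
  if d < t + 2 then 0
  else if Even t then (if d = t + 2 then 2 else 4) / (t + 2)
  else 2 / (t + 1)

section dischargeRate

variable {t d : ℕ}

theorem dischargeRate_of_lt (h : d < t + 2) : dischargeRate t d = 0 := if_pos h

theorem dischargeRate_nonneg (t d : ℕ) : 0 ≤ dischargeRate t d := by
  unfold dischargeRate; split_ifs <;> positivity

theorem dischargeRate_le (t d : ℕ) : dischargeRate t d ≤ 4 / (t + 2) := by
  unfold dischargeRate
  split_ifs
  · positivity
  · gcongr; norm_num
  · exact le_rfl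
  · rw [div_le_div_iff₀ (by positivity) (by positivity)]; linarith

theorem dischargeRate_of_even (ht : Even t) (hd : t + 2 ≤ d) :
    dischargeRate t d = (if d = t + 2 then 2 else 4) / (t + 2) := by
  rw [dischargeRate, if_neg (by omega), if_pos ht]

theorem dischargeRate_of_odd (ht : ¬Even t) (hd : t + 2 ≤ d) :
    dischargeRate t d = 2 / (t + 1) := by
  rw [dischargeRate, if_neg (by omega), if_neg ht]

theorem two_div_le_dischargeRate_of_even (ht : Even t) (hd : t + 2 ≤ d) :
    2 / (t + 2) ≤ dischargeRate t d := by
  rw [dischargeRate_of_even ht hd]; gcongr; split_ifs <;> norm_num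

theorem mul_dischargeRate_le {l : ℕ} (ht : 2 ≤ t) (hd : t + 2 ≤ d) (hl : l ≤ d / 2) :
    l * dischargeRate t d ≤ d - t - 1 := by
  have htq : (2 : ℚ) ≤ t := by exact_mod_cast ht
  by_cases hev : Even t
  · obtain ⟨k, rfl⟩ := hev
    rw [dischargeRate_of_even ⟨k, rfl⟩ hd, mul_div_assoc', div_le_iff₀ (by positivity)]
    split_ifs with hd2
    · have hl' : (l : ℚ) ≤ k + 1 := by exact_mod_cast (show l ≤ k + 1 by omega)
      subst hd2; push_cast; nlinarith
    · obtain hd3 | hd4 : d = k + k + 3 ∨ k + k + 4 ≤ d := by omega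
      · have hl' : (l : ℚ) ≤ k + 1 := by exact_mod_cast (show l ≤ k + 1 by omega)
        subst hd3; push_cast; nlinarith
      · have hl' : 2 * (l : ℚ) ≤ d := by exact_mod_cast (show 2 * l ≤ d by omega)
        have hd' : (k + k + 4 : ℚ) ≤ d := by exact_mod_cast hd4
        push_cast at htq ⊢; nlinarith
  · obtain ⟨k, rfl⟩ := Nat.not_even_iff_odd.mp hev
    rw [dischargeRate_of_odd hev hd, mul_div_assoc', div_le_iff₀ (by positivity)]
    obtain hd2 | hd3 : d = 2 * k + 3 ∨ 2 * k + 4 ≤ d := by omega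
    · have hl' : (l : ℚ) ≤ k + 1 := by exact_mod_cast (show l ≤ k + 1 by omega)
      subst hd2; push_cast; nlinarith
    · have hl' : 2 * (l : ℚ) ≤ d := by exact_mod_cast (show 2 * l ≤ d by omega)
      have hd' : (2 * k + 4 : ℚ) ≤ d := by exact_mod_cast hd3
      push_cast at htq ⊢; nlinarith

theorem mul_dischargeRate_lt {l : ℕ} (hd : 2 * t ≤ d) (hl : l ≤ d / 2) :
    l * dischargeRate t d < d - 2 * t + 4 := by
  have hl' : 2 * (l : ℚ) ≤ d := by exact_mod_cast (show 2 * l ≤ d by omega)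
  have hd' : 2 * (t : ℚ) ≤ d := by exact_mod_cast hd
  calc l * dischargeRate t d ≤ l * (4 / (t + 2)) := by
        gcongr; exact dischargeRate_le t d
    _ < d - 2 * t + 4 := by
        rw [mul_div_assoc', div_lt_iff₀ (by positivity)]
        nlinarith [(t.cast_nonneg : (0 : ℚ) ≤ t)]

theorem one_le_sum_dischargeRate {α : Type*} (H : Finset α) (deg : α → ℕ)
    (hH : ∀ w ∈ H, t + 2 ≤ deg w) (hcard : (t + 1) / 2 ≤ #H)
    (heven : Even t → #H = t / 2 → ∃ w ∈ H, t + 3 ≤ deg w) :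
    1 ≤ ∑ w ∈ H, dischargeRate t (deg w) := by
  classical
  by_cases hev : Even t
  · have hlow : ∀ s ⊆ H, (#s : ℚ) * (2 / (t + 2)) ≤ ∑ w ∈ s, dischargeRate t (deg w) :=
      fun s hs => by
        simpa only [nsmul_eq_mul] using card_nsmul_le_sum s _ _
          fun w hw => two_div_le_dischargeRate_of_even hev (hH w (hs hw))
    obtain ⟨k, rfl⟩ := hev
    by_cases hk : #H = k
    · obtain ⟨w, hw, hw3⟩ := heven ⟨k, rfl⟩ (by omega)
      have hrest := hlow _ (erase_subset w H)
      have hcard' : ((#(H.erase w) : ℕ) : ℚ) + 1 = k := by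
        rw [← hk]; exact_mod_cast card_erase_add_one hw
      rw [← add_sum_erase H _ hw, dischargeRate_of_even ⟨k, rfl⟩ (hH w hw),
        if_neg (show deg w ≠ k + k + 2 by omega)]
      calc (1 : ℚ) = 4 / (↑(k + k) + 2) + #(H.erase w) * (2 / (↑(k + k) + 2)) := by
            rw [eq_sub_of_add_eq hcard']; push_cast; field_simp; ring
        _ ≤ _ := by gcongr
    · have hcard' : (k + 1 : ℚ) ≤ #H := by exact_mod_cast (show k + 1 ≤ #H by omega)
      refine le_trans ?_ (hlow H subset_rfl)
      rw [mul_div_assoc', le_div_iff₀ (by positivity)]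
      push_cast; linarith
  · obtain ⟨k, rfl⟩ := Nat.not_even_iff_odd.mp hev
    have hcard' : (k + 1 : ℚ) ≤ #H := by exact_mod_cast (show k + 1 ≤ #H by omega)
    have hsum : (#H : ℚ) * (2 / (2 * k + 1 + 1)) ≤
        ∑ w ∈ H, dischargeRate (2 * k + 1) (deg w) := by
      simpa only [nsmul_eq_mul, Nat.cast_add, Nat.cast_mul, Nat.cast_ofNat, Nat.cast_one] using
        card_nsmul_le_sum H _ _ fun w hw => (dischargeRate_of_odd hev (hH w hw)).ge
    refine le_trans ?_ hsum
    rw [mul_div_assoc', le_div_iff₀ (by positivity)]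
    linarith

end dischargeRate

section discharging

variable {V : Type*} [Fintype V] (G : SimpleGraph V) [DecidableRel G.Adj] (t : ℕ)

def transfer (u v : V) : ℚ :=
  if G.Adj u v ∧ G.degree v = t then dischargeRate t (G.degree u) else 0

def finalCharge (v : V) : ℚ :=
  G.degree v - 6 - ∑ w, transfer G t v w + ∑ w, transfer G t w v

theorem sum_finalCharge :
    ∑ v, finalCharge G t v = (∑ v, G.degree v : ℕ) - 6 * Fintype.card V := by
  simp only [finalCharge]
  rw [sum_sub_sum_add_sum_swap (fun v => (G.degree v : ℚ) - 6),
    sum_sub_distrib]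
  simp [mul_comm]

theorem sum_transfer_left (v : V) :
    ∑ w, transfer G t v w =
      #{w ∈ G.neighborFinset v | G.degree w = t} * dischargeRate t (G.degree v) := by
  simp only [transfer]
  rw [← sum_filter, sum_const, nsmul_eq_mul]
  congr 3
  ext w
  simp

theorem sum_transfer_right {v : V} (hv : G.degree v = t) :
    ∑ w, transfer G t w v = ∑ w ∈ G.neighborFinset v, dischargeRate t (G.degree w) := by
  simp only [transfer, hv, and_true, ← sum_filter]
  congr 1
  ext w
  simp [G.adj_comm]

theorem sum_transfer_right_nonneg (v : V) : 0 ≤ ∑ w, transfer G t w v :=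
  sum_nonneg fun w _ => by unfold transfer; split_ifs <;> simp [dischargeRate_nonneg]

theorem sub_five_le_finalCharge (ht : 2 ≤ t) {v : V} (hmin : t ≤ G.degree v)
    (hfew_low : t + 2 ≤ G.degree v →
      #{w ∈ G.neighborFinset v | G.degree w = t} ≤ G.degree v / 2)
    (hmany_high : G.degree v = t →
      (t + 1) / 2 ≤ #{w ∈ G.neighborFinset v | t + 2 ≤ G.degree w})
    (heven : Even t → G.degree v = t →
      #{w ∈ G.neighborFinset v | t + 2 ≤ G.degree w} = t / 2 →
      ∃ w ∈ G.neighborFinset v, t + 3 ≤ G.degree w) :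
    (t : ℚ) - 5 ≤ finalCharge G t v := by
  have hin := sum_transfer_right_nonneg G t v
  rw [finalCharge, sum_transfer_left]
  obtain hd | hd | hd : G.degree v = t ∨ G.degree v = t + 1 ∨ t + 2 ≤ G.degree v := by omega
  · set H := {w ∈ G.neighborFinset v | t + 2 ≤ G.degree w}
    have hH : 1 ≤ ∑ w ∈ H, dischargeRate t (G.degree w) :=
      one_le_sum_dischargeRate H (G.degree ·) (fun w hw => (mem_filter.mp hw).2) (hmany_high hd)
        fun hev hcard => by
          obtain ⟨w, hw, hw3⟩ := heven hev hd hcard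
          exact ⟨w, mem_filter.mpr ⟨hw, by omega⟩, hw3⟩
    have hH_le : ∑ w ∈ H, dischargeRate t (G.degree w) ≤
        ∑ w ∈ G.neighborFinset v, dischargeRate t (G.degree w) :=
      sum_le_sum_of_subset_of_nonneg (filter_subset _ _) fun w _ _ => dischargeRate_nonneg t _
    rw [sum_transfer_right G t hd, dischargeRate_of_lt (by omega), hd]
    linarith
  · rw [dischargeRate_of_lt (by omega), hd]
    push_cast
    linarith
  · have := mul_dischargeRate_le ht hd (hfew_low hd)
    linarith

theorem two_mul_sub_ten_lt_finalCharge {v : V} (hv : 2 * t ≤ G.degree v)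
    (hfew_low : #{w ∈ G.neighborFinset v | G.degree w = t} ≤ G.degree v / 2) :
    2 * (t : ℚ) - 10 < finalCharge G t v := by
  have hin := sum_transfer_right_nonneg G t v
  have := mul_dischargeRate_lt hv hfew_low
  rw [finalCharge, sum_transfer_left]
  linarith

end discharging

theorem discharging_inequality_general
    {V : Type*} [Fintype V]
    (G : SimpleGraph V) [DecidableRel G.Adj]
    (t μ : ℕ) (ht : 5 ≤ t)
    (hn : 2 * t + 1 ≤ Fintype.card V)
    (hdegsum : ((∑ v, G.degree v : ℕ) : ℤ) ≤
      6 * (Fintype.card V : ℤ) + 6 * (μ : ℤ) - 12)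
    (hmin : ∀ v, t ≤ G.degree v)
    (hbig : ∃ v, 2 * t ≤ G.degree v)
    (hfew_low : ∀ v, t + 2 ≤ G.degree v →
      ((G.neighborFinset v).filter (fun w => G.degree w = t)).card ≤ G.degree v / 2)
    (hmany_high : ∀ v, G.degree v = t →
      (t + 1) / 2 ≤ ((G.neighborFinset v).filter (fun w => t + 2 ≤ G.degree w)).card)
    (heven : Even t → ∀ v, G.degree v = t →
      ((G.neighborFinset v).filter (fun w => t + 2 ≤ G.degree w)).card = t / 2 →
      ∃ w ∈ G.neighborFinset v, t + 3 ≤ G.degree w) :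
    (2 * (t : ℤ) + 2) * ((t : ℤ) - 5) < 6 * (μ : ℤ) - 12 := by
  obtain ⟨v₀, hv₀⟩ := hbig
  have hlow (v : V) : (t : ℚ) - 5 ≤ finalCharge G t v :=
    sub_five_le_finalCharge G t (by omega) (hmin v) (hfew_low v) (hmany_high v) (heven · v)
  have hhigh : 2 * (t : ℚ) - 10 < finalCharge G t v₀ :=
    two_mul_sub_ten_lt_finalCharge G t hv₀ (hfew_low v₀ (by omega))
  have htotal := card_sub_one_mul_add_lt_sum hlow hhigh
  rw [sum_finalCharge] at htotal
  have hdegsum' : ((∑ v, G.degree v : ℕ) : ℚ) ≤ 6 * Fintype.card V + 6 * μ - 12 := by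
    exact_mod_cast hdegsum
  have hn' : 2 * (t : ℚ) + 1 ≤ Fintype.card V := by exact_mod_cast hn
  have ht' : (5 : ℚ) ≤ t := by exact_mod_cast ht
  have : (2 * (t : ℚ) + 2) * (t - 5) < 6 * μ - 12 := by nlinarith
  exact_mod_cast this

/-- The discharging argument: a graph satisfying properties (i)–(vii) forces
`(2t + 2)(t − 5) < 6μ − 12`. -/
theorem discharging_inequality
    {V : Type*} [Fintype V] [DecidableEq V]
    (G : SimpleGraph V) [DecidableRel G.Adj]
    (t μ : ℕ) (ht : 5 ≤ t) (hμ : 1 ≤ μ)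
    (hn : 2 * t + 1 ≤ Fintype.card V)
    (hdegsum : ((∑ v, G.degree v : ℕ) : ℤ) ≤
      6 * (Fintype.card V : ℤ) + 6 * (μ : ℤ) - 12)
    (hmin : ∀ v, t ≤ G.degree v)
    (hbig : ∃ v, 2 * t ≤ G.degree v)
    (hfew_low : ∀ v, t + 2 ≤ G.degree v →
      ((G.neighborFinset v).filter (fun w => G.degree w = t)).card ≤ G.degree v / 2)
    (hmany_high : ∀ v, G.degree v = t →
      (t + 1) / 2 ≤ ((G.neighborFinset v).filter (fun w => t + 2 ≤ G.degree w)).card)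
    (heven : Even t → ∀ v, G.degree v = t →
      ((G.neighborFinset v).filter (fun w => t + 2 ≤ G.degree w)).card = t / 2 →
      ∃ w ∈ G.neighborFinset v, t + 3 ≤ G.degree w) :
    (2 * (t : ℤ) + 2) * ((t : ℤ) - 5) < 6 * (μ : ℤ) - 12 :=
  discharging_inequality_general G t μ ht hn hdegsum hmin hbig hfew_low hmany_high heven
end
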